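/- Fix B > 0 and κ₀ > 0, and let μ₁,…,μ_n ∈ ℝ satisfy: (L1) −B < min_i μ_i < 0 and 0 < max_i μ_i < B; (L2) |μ̄| ≤ σ̄² · m_B / φ(B), where μ̄ = (1/n)Σ_i μ_i, σ̄² = (1/n)Σ_i (μ_i − μ̄)², and m_B = inf_{t ∈ [B, 3B]} t·φ(t); (L3) (1/n)Σ_i μ_i² > κ₀/φ(3B). Let W(β) = (1/n) Σ_{i=1}^n μ_i Φ(μ_i − β). Then: W has a global maximizer β* ∈ [−2B, 2B] with W(β*) > 0 which is its unique local (and global) maximizer; W''(β*) < −κ₀; and there exists ξ > 0, depending only on B and κ₀, such that sup_{|β − β*| > κ₀/B} W(β) < W(β*) − ξ. -/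

import Mathlib

open MeasureTheory

/-- standard normal density -/
noncomputable def phiR (x : ℝ) : ℝ := (Real.sqrt (2 * Real.pi))⁻¹ * Real.exp (-(x ^ 2) / 2)

/-- standard normal CDF -/
noncomputable def PhiR (x : ℝ) : ℝ := ∫ t in Set.Iic x, phiR t

/-- compound welfare of the threshold rule `1{Y_i ≥ β}` in the homoskedastic
unit-variance zero-cost case -/
noncomputable def Wn (n : ℕ) (μ : Fin n → ℝ) (β : ℝ) : ℝ :=
  (1 / (n:ℝ)) * ∑ i, μ i * PhiR (μ i - β)

/-!
Writing `φ(μᵢ - β) = φ(β) exp(μᵢβ - μᵢ²/2)` gives `W'(β) = -φ(β) M₁(β) / n`, where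
`Mₖ(β) = ∑ μᵢᵏ exp(μᵢβ - μᵢ²/2)` (`tiltedMoment k μ β`) and `M₁' = M₂ > 0`. Hence `W` increases up
to the unique zero `β*` of `M₁` and decreases after it. The zero lies in `[-2B, 2B]` because
`M₁(2B) ≥ 0 ≥ M₁(-2B)`: this is Chebyshev's covariance inequality for the weight `t ↦ φ(t ∓ 2B)`,
whose slope on `[-B, B]` is at least `m_B`, combined with (L2). Since `W → 0` at `+∞`,
`W(β*) > 0`. At `β*` the second derivative is `-(1/n) ∑ μᵢ² φ(μᵢ - β*) ≤ -φ(3B) (1/n) ∑ μᵢ² < -κ₀`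
by (L3). On the window `|β - β*| ≤ 1` the bound `M₂ ≥ φ(3B + 1) / φ(0) · ∑ μᵢ²` makes `W` drop
quadratically, and monotonicity outside the window gives the separation.
-/

open Set Filter Topology Real

lemma phiR_pos (x : ℝ) : 0 < phiR x := by
  unfold phiR; positivity

lemma continuous_phiR : Continuous phiR := by
  unfold phiR; fun_prop

lemma phiR_neg (x : ℝ) : phiR (-x) = phiR x := by
  simp [phiR]

lemma phiR_le_phiR {x y : ℝ} (h : |y| ≤ |x|) : phiR x ≤ phiR y := by
  unfold phiR
  gcongr ?_ * exp (-?_ / 2)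
  simpa only [sq_abs] using pow_le_pow_left₀ (abs_nonneg y) h 2

lemma integrable_phiR : Integrable phiR := by
  have h : phiR = fun x => (√(2 * π))⁻¹ * exp (-(1 / 2) * x ^ 2) := by
    funext x; unfold phiR; ring_nf
  exact h ▸ (integrable_exp_neg_mul_sq (by norm_num)).const_mul _

lemma hasDerivAt_phiR (x : ℝ) : HasDerivAt phiR (-x * phiR x) x := by
  have := ((((hasDerivAt_pow 2 x).fun_neg).div_const 2).exp).const_mul (√(2 * π))⁻¹
  refine this.congr_deriv ?_
  unfold phiR; push_cast; ring

lemma phiR_sub (a β : ℝ) : phiR (a - β) = phiR β * exp (a * β - a ^ 2 / 2) := by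
  unfold phiR
  rw [mul_assoc, ← exp_add]
  ring_nf

lemma sInf_image_mul_phiR_le {a b t : ℝ} (ht : t ∈ Icc a b) :
    sInf ((fun t => t * phiR t) '' Icc a b) ≤ t * phiR t :=
  csInf_le (isCompact_Icc.bddBelow_image (continuous_id.mul continuous_phiR).continuousOn)
    (mem_image_of_mem _ ht)

lemma PhiR_sub_PhiR (a b : ℝ) : PhiR b - PhiR a = ∫ t in a..b, phiR t :=
  intervalIntegral.integral_Iic_sub_Iic integrable_phiR.integrableOn integrable_phiR.integrableOn

lemma hasDerivAt_PhiR (x : ℝ) : HasDerivAt PhiR (phiR x) x := by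
  have h : PhiR = fun y => PhiR 0 + ∫ t in (0 : ℝ)..y, phiR t := by
    funext y; rw [← PhiR_sub_PhiR]; ring
  rw [h]
  exact (intervalIntegral.integral_hasDerivAt_right integrable_phiR.intervalIntegrable
    (continuous_phiR.stronglyMeasurableAtFilter _ _) continuous_phiR.continuousAt).const_add _

lemma tendsto_PhiR_atBot : Tendsto PhiR atBot (𝓝 0) := by
  have hlim := (intervalIntegral_tendsto_integral_Iic 0 integrable_phiR.integrableOn
    tendsto_id).const_sub (PhiR 0)
  convert hlim using 2 with y
  · rw [id, ← PhiR_sub_PhiR]; ring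
  · exact (sub_self _).symm

lemma Convex.mul_sq_sub_le_of_le_deriv {D : Set ℝ} (hD : Convex ℝ D) {f f' : ℝ → ℝ} {C : ℝ}
    (hf : ∀ x, HasDerivAt f (f' x) x) (hC : ∀ x ∈ D, C ≤ f' x) {x y : ℝ} (hx : x ∈ D)
    (hy : y ∈ D) : C * (y - x) ^ 2 ≤ (y - x) * (f y - f x) := by
  have hslope := hD.mul_sub_le_image_sub_of_le_deriv (f := f) (C := C)
    (fun z _ => (hf z).continuousAt.continuousWithinAt)
    (fun z _ => (hf z).differentiableAt.differentiableWithinAt)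
    (fun z hz => (hf z).deriv ▸ hC z (interior_subset hz))
  rcases le_total x y with hxy | hyx
  · calc C * (y - x) ^ 2 = (y - x) * (C * (y - x)) := by ring
      _ ≤ (y - x) * (f y - f x) :=
        mul_le_mul_of_nonneg_left (hslope x hx y hy hxy) (sub_nonneg.2 hxy)
  · calc C * (y - x) ^ 2 = (x - y) * (C * (x - y)) := by ring
      _ ≤ (x - y) * (f x - f y) :=
        mul_le_mul_of_nonneg_left (hslope y hy x hx hyx) (sub_nonneg.2 hyx)
      _ = (y - x) * (f y - f x) := by ring

/-- `f + c (x - a)² / 2` increases up to `a` and decreases after it. -/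
lemma le_sub_sq_of_deriv_mul_sub_le {f f' : ℝ → ℝ} {a c δ : ℝ} (hf : ∀ x, HasDerivAt f (f' x) x)
    (h : ∀ x ∈ Icc (a - δ) (a + δ), f' x * (x - a) ≤ -(c * (x - a) ^ 2)) {x : ℝ}
    (hx : x ∈ Icc (a - δ) (a + δ)) : f x ≤ f a - c * (x - a) ^ 2 / 2 := by
  set g := fun y => f y + c * (y - a) ^ 2 / 2
  have hg : ∀ y, HasDerivAt g (f' y + c * (y - a)) y := fun y => by
    refine ((hf y).add ((((hasDerivAt_id y).sub_const a).pow 2).const_mul c |>.div_const 2))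
      |>.congr_deriv ?_
    simp only [id, Nat.cast_ofNat]; ring
  have hg' : ∀ y ∈ Icc (a - δ) (a + δ), (f' y + c * (y - a)) * (y - a) ≤ 0 := fun y hy => by
    linarith [h y hy]
  have hgc : Continuous g := continuous_iff_continuousAt.2 fun y => (hg y).continuousAt
  suffices g x ≤ g a by simp only [g, sub_self] at this; linarith
  rcases le_total x a with hxa | hax
  · have hsub : Icc x a ⊆ Icc (a - δ) (a + δ) := Icc_subset_Icc hx.1 (by linarith [hx.1, hx.2])
    refine monotoneOn_of_hasDerivWithinAt_nonneg (convex_Icc x a) hgc.continuousOn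
      (fun y _ => (hg y).hasDerivWithinAt) (fun y hy => ?_) ⟨le_rfl, hxa⟩ ⟨hxa, le_rfl⟩ hxa
    rw [interior_Icc] at hy
    exact nonneg_of_mul_nonpos_left (hg' y (hsub (Ioo_subset_Icc_self hy))) (by linarith [hy.2])
  · have hsub : Icc a x ⊆ Icc (a - δ) (a + δ) := Icc_subset_Icc (by linarith [hx.1, hx.2]) hx.2
    refine antitoneOn_of_hasDerivWithinAt_nonpos (convex_Icc a x) hgc.continuousOn
      (fun y _ => (hg y).hasDerivWithinAt) (fun y hy => ?_) ⟨le_rfl, hax⟩ ⟨hax, le_rfl⟩ hax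
    rw [interior_Icc] at hy
    exact nonpos_of_mul_nonpos_left (hg' y (hsub (Ioo_subset_Icc_self hy))) (by linarith [hy.1])

section Unimodal

variable {f : ℝ → ℝ} {a : ℝ}

lemma le_of_strictMonoOn_Iic_of_strictAntiOn_Ici (h₁ : StrictMonoOn f (Iic a))
    (h₂ : StrictAntiOn f (Ici a)) (x : ℝ) : f x ≤ f a :=
  (le_total x a).elim (fun h => h₁.monotoneOn h self_mem_Iic h)
    (fun h => h₂.antitoneOn self_mem_Ici h h)

lemma lt_sub_of_strictMonoOn_Iic_of_strictAntiOn_Ici {δ ξ : ℝ} (h₁ : StrictMonoOn f (Iic a))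
    (h₂ : StrictAntiOn f (Ici a)) (hδ : 0 ≤ δ) (hgap : ∀ x, |x - a| = δ → f x ≤ f a - ξ)
    {x : ℝ} (hx : δ < |x - a|) : f x < f a - ξ := by
  rcases le_total x a with hxa | hax
  · rw [abs_of_nonpos (sub_nonpos.2 hxa)] at hx
    calc f x < f (a - δ) := h₁ hxa (by simp [hδ]) (by linarith)
      _ ≤ f a - ξ := hgap _ (by simp [abs_of_nonneg hδ])
  · rw [abs_of_nonneg (sub_nonneg.2 hax)] at hx
    calc f x < f (a + δ) := h₂ (by simp [hδ]) hax (by linarith)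
      _ ≤ f a - ξ := hgap _ (by simp [abs_of_nonneg hδ])

lemma lt_of_strictAntiOn_Ici_of_tendsto {l : ℝ} (h : StrictAntiOn f (Ici a))
    (hf : Tendsto f atTop (𝓝 l)) : l < f a :=
  calc l ≤ f (a + 1) := le_of_tendsto hf <| (eventually_ge_atTop (a + 1)).mono fun x hx =>
        h.antitoneOn (by simp) (le_trans (by simp) hx) hx
    _ < f a := h self_mem_Ici (by simp) (lt_add_one a)

end Unimodal

section TiltedMoment

variable {ι : Type*} [Fintype ι]

noncomputable def tiltedMoment (k : ℕ) (μ : ι → ℝ) (β : ℝ) : ℝ :=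
  ∑ i, μ i ^ k * exp (μ i * β - μ i ^ 2 / 2)

lemma phiR_mul_tiltedMoment (k : ℕ) (μ : ι → ℝ) (β : ℝ) :
    phiR β * tiltedMoment k μ β = ∑ i, μ i ^ k * phiR (μ i - β) := by
  rw [tiltedMoment, Finset.mul_sum]
  exact Finset.sum_congr rfl fun i _ => by rw [phiR_sub]; ring

lemma hasDerivAt_tiltedMoment (k : ℕ) (μ : ι → ℝ) (β : ℝ) :
    HasDerivAt (tiltedMoment k μ) (tiltedMoment (k + 1) μ β) β := by
  have h : ∀ i, HasDerivAt (fun β => μ i ^ k * exp (μ i * β - μ i ^ 2 / 2))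
      (μ i ^ k * (exp (μ i * β - μ i ^ 2 / 2) * (μ i * 1))) β := fun i =>
    ((((hasDerivAt_id β).const_mul (μ i)).sub_const (μ i ^ 2 / 2)).exp.const_mul (μ i ^ k))
  refine (HasDerivAt.fun_sum fun i _ => h i).congr_deriv ?_
  simp only [tiltedMoment, mul_one]
  exact Finset.sum_congr rfl fun i _ => by ring

lemma continuous_tiltedMoment (k : ℕ) (μ : ι → ℝ) : Continuous (tiltedMoment k μ) :=
  continuous_iff_continuousAt.2 fun β => (hasDerivAt_tiltedMoment k μ β).continuousAt

lemma tiltedMoment_neg (k : ℕ) (μ : ι → ℝ) (β : ℝ) :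
    tiltedMoment k (-μ) β = (-1) ^ k * tiltedMoment k μ (-β) := by
  rw [tiltedMoment, tiltedMoment, Finset.mul_sum]
  exact Finset.sum_congr rfl fun i _ => by simp only [Pi.neg_apply, neg_pow (μ i)]; ring_nf

lemma tiltedMoment_two_pos {μ : ι → ℝ} (hμ : ∃ i, μ i ≠ 0) (β : ℝ) : 0 < tiltedMoment 2 μ β :=
  let ⟨i, hi⟩ := hμ
  Finset.sum_pos' (fun j _ => by positivity) ⟨i, Finset.mem_univ _, by positivity⟩

lemma strictMono_tiltedMoment_one {μ : ι → ℝ} (hμ : ∃ i, μ i ≠ 0) :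
    StrictMono (tiltedMoment 1 μ) :=
  strictMono_of_hasDerivAt_pos (hasDerivAt_tiltedMoment 1 μ) (tiltedMoment_two_pos hμ)

lemma tiltedMoment_two_ge {μ : ι → ℝ} {r β : ℝ} (hr : ∀ i, |μ i - β| ≤ r) :
    phiR r / phiR 0 * ∑ i, μ i ^ 2 ≤ tiltedMoment 2 μ β := by
  rw [Finset.mul_sum]
  refine Finset.sum_le_sum fun i _ => ?_
  rw [mul_comm]
  refine mul_le_mul_of_nonneg_left ?_ (sq_nonneg _)
  have htilt : exp (μ i * β - μ i ^ 2 / 2) = phiR (μ i - β) / phiR β := by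
    rw [phiR_sub, mul_div_cancel_left₀ _ (phiR_pos β).ne']
  rw [htilt]
  exact div_le_div₀ (phiR_pos _).le
    (phiR_le_phiR ((hr i).trans (le_abs_self r)))
    (phiR_pos β) (phiR_le_phiR (by simp))

end TiltedMoment

section Chebyshev

variable {ι : Type*} [Fintype ι]

lemma sum_sub_mean_eq_zero (μ : ι → ℝ) : ∑ i, (μ i - 1 / Fintype.card ι * ∑ j, μ j) = 0 := by
  rcases isEmpty_or_nonempty ι with _ | _
  · simp
  rw [Finset.sum_sub_distrib, Finset.sum_const, Finset.card_univ, nsmul_eq_mul]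
  field_simp [(Fintype.card_pos : 0 < Fintype.card ι).ne']
  ring

lemma sum_sub_mul_sub_of_sum_sub_eq_zero {x : ι → ℝ} {c : ℝ} (hc : ∑ i, (x i - c) = 0)
    (q : ι → ℝ) (d : ℝ) : ∑ i, (x i - c) * (q i - d) = ∑ i, x i * q i - c * ∑ i, q i := by
  have h : ∀ i, (x i - c) * (q i - d) = x i * q i - c * q i - d * (x i - c) := fun i => by ring
  rw [Finset.sum_congr rfl fun i _ => h i, Finset.sum_sub_distrib, Finset.sum_sub_distrib,
    ← Finset.mul_sum, ← Finset.mul_sum, hc, mul_zero, sub_zero]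

lemma mem_Icc_of_sum_sub_eq_zero [Nonempty ι] {μ : ι → ℝ} {B c : ℝ}
    (hμ : ∀ i, μ i ∈ Icc (-B) B) (hc : ∑ i, (μ i - c) = 0) : c ∈ Icc (-B) B := by
  obtain ⟨i, -, hi⟩ := Finset.exists_le_of_sum_le Finset.univ_nonempty
    (f := fun _ => (0 : ℝ)) (g := fun i => μ i - c) (by simp [hc])
  obtain ⟨j, -, hj⟩ := Finset.exists_le_of_sum_le Finset.univ_nonempty
    (f := fun i => μ i - c) (g := fun _ => (0 : ℝ)) (by simp [hc])
  exact ⟨by linarith [(hμ j).1], by linarith [(hμ i).2]⟩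

/-- Chebyshev's covariance inequality for the weight `t ↦ φ(t - 2B)`, whose slope on `[-B, B]` is
at least `m`: the covariance term `m ∑ (μᵢ - c)²` dominates the mean term `|c| ∑ φ(μᵢ - 2B)`. -/
lemma sum_mul_phiR_sub_two_mul_nonneg {μ : ι → ℝ} {B c m : ℝ}
    (hμ : ∀ i, μ i ∈ Icc (-B) B) (hc : ∑ i, (μ i - c) = 0)
    (hm : ∀ t ∈ Icc B (3 * B), m ≤ t * phiR t)
    (hL2 : |c| ≤ (1 / Fintype.card ι * ∑ i, (μ i - c) ^ 2) * (m / phiR B)) :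
    0 ≤ ∑ i, μ i * phiR (μ i - 2 * B) := by
  rcases isEmpty_or_nonempty ι with _ | _
  · simp
  set p : ℝ → ℝ := fun t => phiR (t - 2 * B)
  have hp : ∀ t, HasDerivAt p ((2 * B - t) * phiR (2 * B - t)) t := fun t => by
    refine ((hasDerivAt_phiR _).comp_sub_const t (2 * B)).congr_deriv ?_
    rw [← phiR_neg]; ring_nf
  have hslope : ∀ i, m * (μ i - c) ^ 2 ≤ (μ i - c) * (p (μ i) - p c) := fun i =>
    (convex_Icc (-B) B).mul_sq_sub_le_of_le_deriv hp
      (fun t ht => hm _ ⟨by linarith [ht.2], by linarith [ht.1]⟩)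
      (mem_Icc_of_sum_sub_eq_zero hμ hc) (hμ i)
  have hp_le : ∀ i, p (μ i) ≤ phiR B := fun i =>
    phiR_le_phiR <| by
      rw [abs_of_nonneg (by linarith [(hμ i).1, (hμ i).2] : 0 ≤ B)]
      exact le_abs.2 (Or.inr (by linarith [(hμ i).2]))
  have hmean : -(Fintype.card ι * (|c| * phiR B)) ≤ c * ∑ i, p (μ i) := by
    have hsum : ∑ i, p (μ i) ≤ Fintype.card ι * phiR B := by
      simpa using Finset.sum_le_card_nsmul Finset.univ _ _ fun i _ => hp_le i
    have hsum0 : 0 ≤ ∑ i, p (μ i) := Finset.sum_nonneg fun i _ => (phiR_pos _).le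
    calc -(Fintype.card ι * (|c| * phiR B)) = -|c| * (Fintype.card ι * phiR B) := by ring
      _ ≤ -|c| * ∑ i, p (μ i) := mul_le_mul_of_nonpos_left hsum (neg_nonpos.2 (abs_nonneg c))
      _ ≤ c * ∑ i, p (μ i) := mul_le_mul_of_nonneg_right (neg_abs_le c) hsum0
  have hL2' : Fintype.card ι * (|c| * phiR B) ≤ m * ∑ i, (μ i - c) ^ 2 := by
    calc _ ≤ Fintype.card ι * ((1 / Fintype.card ι * ∑ i, (μ i - c) ^ 2) * (m / phiR B) *
          phiR B) := by gcongr; exact (phiR_pos B).le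
      _ = m * ∑ i, (μ i - c) ^ 2 := by field_simp [(phiR_pos B).ne']
  have hvar : m * ∑ i, (μ i - c) ^ 2 ≤ ∑ i, μ i * p (μ i) - c * ∑ i, p (μ i) := by
    rw [← sum_sub_mul_sub_of_sum_sub_eq_zero hc (fun i => p (μ i)) (p c), Finset.mul_sum]
    exact Finset.sum_le_sum fun i _ => hslope i
  linarith

lemma exists_tiltedMoment_one_eq_zero {μ : ι → ℝ} {B c m : ℝ} (hB : 0 < B)
    (hμ : ∀ i, μ i ∈ Icc (-B) B) (hc : ∑ i, (μ i - c) = 0)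
    (hm : ∀ t ∈ Icc B (3 * B), m ≤ t * phiR t)
    (hL2 : |c| ≤ (1 / Fintype.card ι * ∑ i, (μ i - c) ^ 2) * (m / phiR B)) :
    ∃ β ∈ Icc (-(2 * B)) (2 * B), tiltedMoment 1 μ β = 0 := by
  have hright : 0 ≤ tiltedMoment 1 μ (2 * B) := by
    have h : 0 ≤ phiR (2 * B) * tiltedMoment 1 μ (2 * B) := by
      simpa [phiR_mul_tiltedMoment] using sum_mul_phiR_sub_two_mul_nonneg hμ hc hm hL2
    exact nonneg_of_mul_nonneg_right h (phiR_pos _)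
  have hleft : tiltedMoment 1 μ (-(2 * B)) ≤ 0 := by
    have hneg := sum_mul_phiR_sub_two_mul_nonneg (μ := -μ) (c := -c)
      (fun i => ⟨neg_le_neg (hμ i).2, neg_le.1 (hμ i).1⟩)
      (by simp only [Pi.neg_apply, neg_sub_neg, ← neg_sub (μ _) c, Finset.sum_neg_distrib, hc,
        neg_zero]) hm
      (by simpa only [Pi.neg_apply, neg_sub_neg, abs_neg, ← neg_sub (μ _) c, neg_sq] using hL2)
    have h : 0 ≤ phiR (2 * B) * tiltedMoment 1 (-μ) (2 * B) := by
      simpa [phiR_mul_tiltedMoment] using hneg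
    rw [tiltedMoment_neg, pow_one, neg_one_mul, mul_neg, neg_nonneg] at h
    exact nonpos_of_mul_nonpos_right h (phiR_pos _)
  exact intermediate_value_Icc (by linarith) (continuous_tiltedMoment 1 μ).continuousOn
    ⟨hleft, hright⟩

end Chebyshev

section Welfare

variable {n : ℕ} {μ : Fin n → ℝ}

lemma hasDerivAt_Wn (n : ℕ) (μ : Fin n → ℝ) (β : ℝ) :
    HasDerivAt (Wn n μ) (-(phiR β * tiltedMoment 1 μ β) / n) β := by
  have h : ∀ i, HasDerivAt (fun β => μ i * PhiR (μ i - β)) (-(μ i * phiR (μ i - β))) β :=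
    fun i => (((hasDerivAt_PhiR _).comp β ((hasDerivAt_id β).const_sub (μ i))).const_mul
      (μ i)).congr_deriv (by simp)
  refine ((HasDerivAt.fun_sum fun i _ => h i).const_mul (1 / (n : ℝ))).congr_deriv ?_
  simp only [phiR_mul_tiltedMoment, pow_one, Finset.sum_neg_distrib]
  ring

lemma tendsto_Wn_atTop (n : ℕ) (μ : Fin n → ℝ) : Tendsto (Wn n μ) atTop (𝓝 0) := by
  have hsub : ∀ a : ℝ, Tendsto (fun β => a - β) atTop atBot := fun a => by
    simpa [sub_eq_add_neg] using tendsto_atBot_add_const_left atTop a tendsto_neg_atTop_atBot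
  have h : ∀ i, Tendsto (fun β => μ i * PhiR (μ i - β)) atTop (𝓝 0) := fun i => by
    simpa using (tendsto_PhiR_atBot.comp (hsub (μ i))).const_mul (μ i)
  have hsum := (tendsto_finsetSum Finset.univ fun i _ => h i).const_mul (1 / (n : ℝ))
  rw [Finset.sum_const_zero, mul_zero] at hsum
  exact hsum

lemma deriv_deriv_Wn {β : ℝ} (hzero : tiltedMoment 1 μ β = 0) :
    deriv (deriv (Wn n μ)) β = -(∑ i, μ i ^ 2 * phiR (μ i - β)) / n := by
  have hderiv : deriv (Wn n μ) = fun β => -(phiR β * tiltedMoment 1 μ β) / n :=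
    funext fun β => (hasDerivAt_Wn n μ β).deriv
  have h := (((hasDerivAt_phiR β).fun_mul (hasDerivAt_tiltedMoment 1 μ β)).fun_neg).div_const
    (n : ℝ)
  rw [hderiv, h.deriv, ← phiR_mul_tiltedMoment, hzero]
  ring

variable {βs : ℝ}

lemma strictMonoOn_Wn_Iic (hn : 0 < n) (hμ : ∃ i, μ i ≠ 0) (hzero : tiltedMoment 1 μ βs = 0) :
    StrictMonoOn (Wn n μ) (Iic βs) := by
  refine strictMonoOn_of_hasDerivWithinAt_pos (convex_Iic βs)
    (fun β _ => (hasDerivAt_Wn n μ β).continuousAt.continuousWithinAt)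
    (fun β _ => (hasDerivAt_Wn n μ β).hasDerivWithinAt) fun β hβ => ?_
  rw [interior_Iic] at hβ
  have hneg : tiltedMoment 1 μ β < 0 := hzero ▸ strictMono_tiltedMoment_one hμ hβ
  exact div_pos (neg_pos.2 (mul_neg_of_pos_of_neg (phiR_pos β) hneg)) (Nat.cast_pos.2 hn)

lemma strictAntiOn_Wn_Ici (hn : 0 < n) (hμ : ∃ i, μ i ≠ 0) (hzero : tiltedMoment 1 μ βs = 0) :
    StrictAntiOn (Wn n μ) (Ici βs) := by
  refine strictAntiOn_of_hasDerivWithinAt_neg (convex_Ici βs)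
    (fun β _ => (hasDerivAt_Wn n μ β).continuousAt.continuousWithinAt)
    (fun β _ => (hasDerivAt_Wn n μ β).hasDerivWithinAt) fun β hβ => ?_
  rw [interior_Ici] at hβ
  have hpos : 0 < tiltedMoment 1 μ β := hzero ▸ strictMono_tiltedMoment_one hμ hβ
  exact div_neg_of_neg_of_pos (neg_neg_of_pos (mul_pos (phiR_pos β) hpos)) (Nat.cast_pos.2 hn)

lemma eq_of_isLocalMax_Wn (hn : 0 < n) (hμ : ∃ i, μ i ≠ 0) (hzero : tiltedMoment 1 μ βs = 0)
    {β : ℝ} (h : IsLocalMax (Wn n μ) β) : β = βs := by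
  have hcrit : tiltedMoment 1 μ β = 0 := by
    simpa [(phiR_pos β).ne', hn.ne'] using h.hasDerivAt_eq_zero (hasDerivAt_Wn n μ β)
  exact (strictMono_tiltedMoment_one hμ).injective (hcrit.trans hzero.symm)

lemma deriv_deriv_Wn_le {r : ℝ} (hzero : tiltedMoment 1 μ βs = 0) (hr : ∀ i, |μ i - βs| ≤ r) :
    deriv (deriv (Wn n μ)) βs ≤ -(phiR r * (1 / n * ∑ i, μ i ^ 2)) := by
  have h : phiR r * ∑ i, μ i ^ 2 ≤ ∑ i, μ i ^ 2 * phiR (μ i - βs) := by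
    rw [Finset.mul_sum]
    exact Finset.sum_le_sum fun i _ => by
      rw [mul_comm]
      exact mul_le_mul_of_nonneg_left (phiR_le_phiR ((hr i).trans (le_abs_self r))) (sq_nonneg _)
  rw [deriv_deriv_Wn hzero, neg_div, neg_le_neg_iff]
  calc phiR r * (1 / n * ∑ i, μ i ^ 2) = phiR r * (∑ i, μ i ^ 2) / n := by ring
    _ ≤ (∑ i, μ i ^ 2 * phiR (μ i - βs)) / n := by gcongr

lemma Wn_le_sub_sq {B κ : ℝ} (hμ : ∀ i, μ i ∈ Icc (-B) B) (hzero : tiltedMoment 1 μ βs = 0)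
    (hβs : βs ∈ Icc (-(2 * B)) (2 * B)) (hκ : κ ≤ 1 / n * ∑ i, μ i ^ 2) {x : ℝ}
    (hx : x ∈ Icc (βs - 1) (βs + 1)) :
    Wn n μ x ≤ Wn n μ βs -
      phiR (2 * B + 1) * (phiR (3 * B + 1) / phiR 0 * κ) * (x - βs) ^ 2 / 2 := by
  set A := phiR (3 * B + 1) / phiR 0
  have hA : 0 ≤ A := div_nonneg (phiR_pos _).le (phiR_pos _).le
  have hslope : ∀ u ∈ Icc (βs - 1) (βs + 1),
      A * (∑ i, μ i ^ 2) * (u - βs) ^ 2 ≤ (u - βs) * tiltedMoment 1 μ u := fun u hu => by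
    simpa [hzero] using (convex_Icc (βs - 1) (βs + 1)).mul_sq_sub_le_of_le_deriv
      (hasDerivAt_tiltedMoment 1 μ) (fun v hv => tiltedMoment_two_ge (r := 3 * B + 1) fun i =>
        abs_le.2 ⟨by linarith [(hμ i).1, hβs.2, hv.2], by linarith [(hμ i).2, hβs.1, hv.1]⟩)
      (x := βs) ⟨by linarith, by linarith⟩ hu
  refine le_sub_sq_of_deriv_mul_sub_le (hasDerivAt_Wn n μ) (fun u hu => ?_) hx
  have hφu : phiR (2 * B + 1) ≤ phiR u := phiR_le_phiR (abs_le.2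
    ⟨by linarith [hβs.1, hu.1], by linarith [hβs.2, hu.2]⟩ |>.trans (le_abs_self _))
  have hAS : 0 ≤ A * (1 / n * ∑ i, μ i ^ 2) := by
    have := Finset.sum_nonneg fun i (_ : i ∈ Finset.univ) => sq_nonneg (μ i)
    positivity
  have key : phiR (2 * B + 1) * (A * κ) * (u - βs) ^ 2 ≤
      phiR u * ((u - βs) * tiltedMoment 1 μ u) / n :=
    calc phiR (2 * B + 1) * (A * κ) * (u - βs) ^ 2
        ≤ phiR (2 * B + 1) * (A * (1 / n * ∑ i, μ i ^ 2)) * (u - βs) ^ 2 := by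
          gcongr; exact (phiR_pos _).le
      _ ≤ phiR u * (A * (1 / n * ∑ i, μ i ^ 2)) * (u - βs) ^ 2 := by gcongr
      _ = phiR u * (A * (∑ i, μ i ^ 2) * (u - βs) ^ 2) / n := by ring
      _ ≤ phiR u * ((u - βs) * tiltedMoment 1 μ u) / n := div_le_div_of_nonneg_right
          (mul_le_mul_of_nonneg_left (hslope u hu) (phiR_pos u).le) (Nat.cast_nonneg n)
  calc -(phiR u * tiltedMoment 1 μ u) / n * (u - βs)
      = -(phiR u * ((u - βs) * tiltedMoment 1 μ u) / n) := by ring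
    _ ≤ _ := neg_le_neg key

end Welfare

/-- the low-level conditions (L1)–(L3) imply the fast-rate conditions:
a unique, well-separated, curved interior maximizer of the welfare. -/
theorem low_level_conditions_give_fast_rate (B κ₀ : ℝ) (hB : 0 < B) (hκ : 0 < κ₀) :
    ∃ ξ : ℝ, 0 < ξ ∧
      ∀ (n : ℕ), 0 < n → ∀ μ : Fin n → ℝ,
        -- (L1): −B < min μ_i < 0 and 0 < max μ_i < B
        ((∀ i, -B < μ i ∧ μ i < B) ∧ (∃ i, μ i < 0) ∧ (∃ i, 0 < μ i)) →
        -- (L2): |μ̄| ≤ σ̄² · m_B / φ(B)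
        |(1 / (n:ℝ)) * ∑ i, μ i| ≤
          ((1 / (n:ℝ)) * ∑ i, (μ i - (1 / (n:ℝ)) * ∑ j, μ j) ^ 2) *
            (sInf ((fun t => t * phiR t) '' Set.Icc B (3 * B)) / phiR B) →
        -- (L3): (1/n) Σ μ_i² > κ₀ / φ(3B)
        κ₀ / phiR (3 * B) < (1 / (n:ℝ)) * ∑ i, (μ i) ^ 2 →
        ∃ βs : ℝ, βs ∈ Set.Icc (-(2 * B)) (2 * B) ∧
          (∀ β, Wn n μ β ≤ Wn n μ βs) ∧ 0 < Wn n μ βs ∧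
          (∀ β, IsLocalMax (Wn n μ) β → β = βs) ∧
          deriv (deriv (Wn n μ)) βs < -κ₀ ∧
          ∀ β, κ₀ / B < |β - βs| → Wn n μ β < Wn n μ βs - ξ := by
  set δ := min (κ₀ / B) 1
  set c := phiR (2 * B + 1) * (phiR (3 * B + 1) / phiR 0 * (κ₀ / phiR (3 * B)))
  have hδ : 0 < δ := lt_min (div_pos hκ hB) one_pos
  have hc : 0 < c := mul_pos (phiR_pos _)
    (mul_pos (div_pos (phiR_pos _) (phiR_pos _)) (div_pos hκ (phiR_pos _)))
  refine ⟨c * δ ^ 2 / 2, by positivity, fun n hn μ ⟨hμB, ⟨i, hi⟩, _⟩ hL2 hL3 => ?_⟩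
  have hμ : ∀ i, μ i ∈ Icc (-B) B := fun i => ⟨(hμB i).1.le, (hμB i).2.le⟩
  have hμ0 : ∃ i, μ i ≠ 0 := ⟨i, hi.ne⟩
  obtain ⟨βs, hβs, hzero⟩ := exists_tiltedMoment_one_eq_zero (c := 1 / (n : ℝ) * ∑ j, μ j) hB hμ
    (by simpa using sum_sub_mean_eq_zero μ) (fun t => sInf_image_mul_phiR_le) (by simpa using hL2)
  have hmono := strictMonoOn_Wn_Iic hn hμ0 hzero
  have hanti := strictAntiOn_Wn_Ici hn hμ0 hzero
  refine ⟨βs, hβs, le_of_strictMonoOn_Iic_of_strictAntiOn_Ici hmono hanti,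
    lt_of_strictAntiOn_Ici_of_tendsto hanti (tendsto_Wn_atTop n μ),
    fun β h => eq_of_isLocalMax_Wn hn hμ0 hzero h, ?_, fun β hβ => ?_⟩
  · have h3B : ∀ i, |μ i - βs| ≤ 3 * B := fun i =>
      abs_le.2 ⟨by linarith [hμB i, hβs.2], by linarith [hμB i, hβs.1]⟩
    linarith [deriv_deriv_Wn_le hzero h3B, (div_lt_iff₀ (phiR_pos (3 * B))).1 hL3]
  · refine lt_sub_of_strictMonoOn_Iic_of_strictAntiOn_Ici hmono hanti hδ.le (fun x hx => ?_)
      ((min_le_left _ _).trans_lt hβ)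
    have hx1 := abs_le.1 (hx.le.trans (min_le_right _ _))
    have hgap := Wn_le_sub_sq hμ hzero hβs hL3.le (x := x)
      ⟨by linarith [hx1.1], by linarith [hx1.2]⟩
    rwa [← sq_abs, hx] at hgap
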